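/- Let M be a multiplication L-module and let N be a prime element of M. Then (√(N:I_M))·δ₁(N) ≤ N ≤ δ₁(N). -/
import Mathlib


open CompleteLattice

universe u v

/-- A multiplicative lattice: a complete lattice with a commutative, associative
multiplication distributing over arbitrary joins, whose top element is the
multiplicative identity. -/
class MultiplicativeLattice (L : Type u) extends CompleteLattice L, CommMonoid L where
  one_eq_top : (1 : L) = ⊤
  sSup_mul : ∀ (S : Set L) (b : L), sSup S * b = ⨆ a ∈ S, a * b

/-- A lattice module over a multiplicative lattice. -/
class LatticeModule (L : Type u) [MultiplicativeLattice L] (M : Type v)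
    extends CompleteLattice M, SMul L M where
  sSup_smul : ∀ (S : Set L) (A : M), (SupSet.sSup S : L) • A = ⨆ a ∈ S, a • A
  smul_sSup : ∀ (a : L) (S : Set M), a • sSup S = ⨆ B ∈ S, a • B
  mul_smul : ∀ (a b : L) (A : M), (a * b) • A = a • b • A
  one_smul : ∀ A : M, (1 : L) • A = A
  bot_smul : ∀ A : M, (⊥ : L) • A = (⊥ : M)

section LatticeDefs

variable {L : Type u} [MultiplicativeLattice L]

/-- The residual `(a : b)` in `L`. -/
def lColon (a b : L) : L := sSup {x : L | x * b ≤ a}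

/-- The radical `√a` of an element of `L`. -/
def radL (a : L) : L :=
  sSup {x : L | IsCompactElement x ∧ ∃ n : ℕ, 1 ≤ n ∧ x ^ n ≤ a}

/-- A principal element of a multiplicative lattice (meet principal and join principal). -/
def IsPrincipalElemL (e : L) : Prop :=
  (∀ a b : L, a ⊓ b * e = (lColon a e ⊓ b) * e) ∧
  (∀ a b : L, lColon (a * e ⊔ b) e = lColon b e ⊔ a)

/-- An expansion function on `L`. -/
def IsExpansionL (δ : L → L) : Prop :=
  (∀ a : L, a ≤ δ a) ∧ ∀ a b : L, a ≤ b → δ a ≤ δ b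

/-- A 2-absorbing element of `L`. -/
def Is2AbsorbingL (q : L) : Prop :=
  q < ⊤ ∧ ∀ a b c : L, a * b * c ≤ q → a * b ≤ q ∨ b * c ≤ q ∨ c * a ≤ q

/-- A 2-absorbing primary element of `L`. -/
def Is2AbsorbingPrimaryL (q : L) : Prop :=
  q < ⊤ ∧ ∀ a b c : L, a * b * c ≤ q → a * b ≤ q ∨ b * c ≤ radL q ∨ c * a ≤ radL q

/-- A `δL`-primary element of `L`. -/
def IsDeltaLPrimaryL (δL : L → L) (p : L) : Prop :=
  p < ⊤ ∧ ∀ a b : L, a * b ≤ p → a ≤ p ∨ b ≤ δL p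

end LatticeDefs

/-- `L` is a PG-lattice: every element is a join of principal elements. -/
def IsPGLattice (L : Type u) [MultiplicativeLattice L] : Prop :=
  ∀ a : L, a = sSup {e : L | IsPrincipalElemL e ∧ e ≤ a}

section ModuleDefs

variable (L : Type u) {M : Type v} [MultiplicativeLattice L] [LatticeModule L M]

/-- The element `(A : B)` of `L`, for `A B : M`. -/
def mColon (A B : M) : L := sSup {x : L | x • B ≤ A}

/-- The element `(N : a)` of `M`, for `N : M`, `a : L`. -/
def resColon (N : M) (a : L) : M := sSup {X : M | a • X ≤ N}

/-- An expansion function on the `L`-module `M`. -/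
def IsExpansionM (δ : M → M) : Prop :=
  (∀ A : M, A ≤ δ A) ∧ ∀ A B : M, A ≤ B → δ A ≤ δ B

/-- A `δ`-primary element of the `L`-module `M`. -/
def IsDeltaPrimaryM (δ : M → M) (P : M) : Prop :=
  P < ⊤ ∧ ∀ (a : L) (A : M), a • A ≤ P → A ≤ P ∨ a • (⊤ : M) ≤ δ P

/-- A prime element of the `L`-module `M`. -/
def IsPrimeM (P : M) : Prop :=
  P < ⊤ ∧ ∀ (a : L) (A : M), a • A ≤ P → A ≤ P ∨ a • (⊤ : M) ≤ P

/-- A primary element of the `L`-module `M`. -/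
def IsPrimaryM (P : M) : Prop :=
  P < ⊤ ∧ ∀ (a : L) (A : M), a • A ≤ P → A ≤ P ∨ ∃ n : ℕ, 1 ≤ n ∧ a ^ n • (⊤ : M) ≤ P

/-- A principal element of the `L`-module `M` (meet principal and join principal). -/
def IsPrincipalElemM (N : M) : Prop :=
  (∀ (b : L) (B : M), (b ⊓ mColon L B N) • N = b • N ⊓ B) ∧
  (∀ (b : L) (B : M), b ⊔ mColon L B N = mColon L (b • N ⊔ B) N)

/-- A maximal element of the `L`-module `M`. -/
def IsMaximalM (H : M) : Prop :=
  H < ⊤ ∧ ∀ B : M, H ≤ B → B = H ∨ B = ⊤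

/-- A meet prime element of the `L`-module `M`. -/
def IsMeetPrimeM (N : M) : Prop :=
  N < ⊤ ∧ ∀ A B : M, A ⊓ B ≤ N → A ≤ N ∨ B ≤ N

/-- The expansion function `δ₁` on a multiplication `L`-module `M`:
`δ₁(A) = (√(A : I_M)) I_M`. -/
def delta1 (A : M) : M := radL (mColon L A (⊤ : M)) • (⊤ : M)

/-- The expansion function `δ₂`: meet of all maximal elements above a proper element. -/
noncomputable def delta2 (A : M) : M := by
  classical exact if A = ⊤ then ⊤ else sInf {H : M | A ≤ H ∧ IsMaximalM L H}

/-- A 2-absorbing primary element of the `L`-module `M`. -/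
def Is2AbsorbingPrimaryM (Q : M) : Prop :=
  Q < ⊤ ∧ ∀ (a b : L) (N : M), (a * b) • N ≤ Q →
    a * b ≤ mColon L Q (⊤ : M) ∨
    b • N ≤ radL (mColon L Q (⊤ : M)) • (⊤ : M) ∨
    a • N ≤ radL (mColon L Q (⊤ : M)) • (⊤ : M)

/-- A `δL`-primary element of the `L`-module `M`, for an expansion function `δL` on `L`. -/
def IsDeltaLPrimaryM (δL : L → L) (P : M) : Prop :=
  P < ⊤ ∧ ∀ (a : L) (A : M), a • A ≤ P → A ≤ P ∨ a ≤ δL (mColon L P (⊤ : M))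

end ModuleDefs

/-- `M` is a PG-lattice `L`-module: every element is a join of principal elements. -/
def IsPGModule (L : Type u) (M : Type v) [MultiplicativeLattice L] [LatticeModule L M] : Prop :=
  ∀ N : M, N = sSup {E : M | IsPrincipalElemM L E ∧ E ≤ N}

/-- `M` is a multiplication `L`-module. -/
def IsMultiplicationModule (L : Type u) (M : Type v)
    [MultiplicativeLattice L] [LatticeModule L M] : Prop :=
  ∀ N : M, ∃ a : L, N = a • (⊤ : M)

/-- `M` is a faithful `L`-module: `(O_M : I_M) = 0`. -/
def IsFaithfulModule (L : Type u) (M : Type v)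
    [MultiplicativeLattice L] [LatticeModule L M] : Prop :=
  mColon L (⊥ : M) (⊤ : M) = (⊥ : L)

section Helpers

variable {L : Type u} {M : Type v} [MultiplicativeLattice L] [LatticeModule L M]

lemma lm_smul_mono_left {a b : L} (A : M) (h : a ≤ b) : a • A ≤ b • A := by
  have : sSup {a, b} • A = ⨆ c ∈ ({a, b} : Set L), c • A := LatticeModule.sSup_smul _ _
  have hs : sSup ({a, b} : Set L) = b := by simp [sSup_pair, sup_eq_right.mpr h]
  rw [hs] at this
  rw [this]
  exact le_biSup (fun c => c • A) (Set.mem_insert a {b})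

lemma lm_smul_mono_right (a : L) {A B : M} (h : A ≤ B) : a • A ≤ a • B := by
  have : a • sSup {A, B} = ⨆ C ∈ ({A, B} : Set M), a • C := LatticeModule.smul_sSup _ _
  have hs : sSup ({A, B} : Set M) = B := by simp [sSup_pair, sup_eq_right.mpr h]
  rw [hs] at this
  rw [this]
  exact le_biSup (fun C => a • C) (Set.mem_insert A {B})

lemma mColon_smul_le (N : M) : mColon L N (⊤ : M) • (⊤ : M) ≤ N := by
  rw [mColon, LatticeModule.sSup_smul]
  exact iSup₂_le fun x hx => hx

end Helpers

theorem stmt16 {L : Type u} {M : Type v} [MultiplicativeLattice L] [LatticeModule L M]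
    [IsCompactlyGenerated L]
    (h1cpt : IsCompactElement (1 : L))
    (hmulcpt : ∀ a b : L, IsCompactElement a → IsCompactElement b → IsCompactElement (a * b))
    (hmult : IsMultiplicationModule L M)
    (N : M) (hN : IsPrimeM L N) :
    radL (mColon L N (⊤ : M)) • delta1 L N ≤ N ∧ N ≤ delta1 L N := by
  set p := mColon L N (⊤ : M) with hp
  have hpN : p • (⊤ : M) ≤ N := mColon_smul_le N
  -- radL p ≤ p, using primeness of N
  have hrad : radL p ≤ p := by
    rw [radL]
    apply _root_.sSup_le
    rintro x ⟨-, n, hn, hxn⟩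
    -- x ^ n • ⊤ ≤ N implies x • ⊤ ≤ N
    have key : ∀ m : ℕ, x ^ (m + 1) • (⊤ : M) ≤ N → x • (⊤ : M) ≤ N := by
      intro m
      induction m with
      | zero => intro h; simpa using h
      | succ k ih =>
        intro h
        rw [pow_succ, mul_comm, LatticeModule.mul_smul] at h
        rcases hN.2 x (x ^ (k + 1) • (⊤ : M)) h with h1 | h1
        · exact ih h1
        · exact h1
      -- done
    obtain ⟨m, rfl⟩ : ∃ m, n = m + 1 := ⟨n - 1, by omega⟩
    have hxsm : x ^ (m + 1) • (⊤ : M) ≤ N :=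
      le_trans (le_trans (lm_smul_mono_left _ hxn) hpN) le_rfl
    have hx : x • (⊤ : M) ≤ N := key m hxsm
    exact le_sSup hx
  constructor
  · calc radL p • delta1 L N ≤ radL p • (⊤ : M) := lm_smul_mono_right _ le_top
      _ ≤ p • (⊤ : M) := lm_smul_mono_left _ hrad
      _ ≤ N := hpN
  · obtain ⟨a, ha⟩ := hmult N
    have hap : a ≤ p := le_sSup ha.ge
    have harad : a ≤ radL p := by
      obtain ⟨S, hS, hSeq⟩ := IsCompactlyGenerated.exists_sSup_eq a
      rw [← hSeq]
      apply _root_.sSup_le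
      intro x hx
      refine le_sSup ⟨hS x hx, 1, le_refl 1, ?_⟩
      rw [pow_one]
      exact le_trans (le_sSup hx) (hSeq ▸ hap)
    calc N = a • (⊤ : M) := ha
      _ ≤ radL p • (⊤ : M) := lm_smul_mono_left _ harad
      _ = delta1 L N := rfl
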